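/- arXiv:2112.08295 — 9 statements merged into one kernel-verified Lean document; each statement's English description precedes it below -/
import Mathlib

section
/- Let V be a real normed vector space and let a, b, c, d, x ∈ V. If x lies on the closed segment [a,b] and also on the closed segment [c,d], then dist(a,c) + dist(b,d) ≤ dist(a,b) + dist(c,d). (This is the exchange inequality showing that replacing two crossing matching segments by two non-crossing ones does not increase total length.) -/
/-- Exchange inequality: if `x` lies on both closed segments `[a,b]` and `[c,d]` in a real
normed vector space, then `dist a c + dist b d ≤ dist a b + dist c d`. -/
theorem crossing_exchange_le {V : Type*} [NormedAddCommGroup V] [NormedSpace ℝ V]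
    (a b c d x : V) (hab : x ∈ segment ℝ a b) (hcd : x ∈ segment ℝ c d) :
    dist a c + dist b d ≤ dist a b + dist c d := by
  have h1 := dist_add_dist_of_mem_segment hab
  have h2 := dist_add_dist_of_mem_segment hcd
  have t1 := dist_triangle a x c
  have t2 := dist_triangle b x d
  have e1 : dist x c = dist c x := dist_comm _ _
  have e2 : dist b x = dist x b := dist_comm _ _
  linarith
end

section
/- Let a, b, c, d, x be points of the Euclidean plane ℝ². Suppose x lies on the open segment (a,b) and also on the open segment (c,d), and suppose the four points a, b, c, d are not all collinear. Then dist(a,c) + dist(b,d) < dist(a,b) + dist(c,d). (Two crossing segments are the diagonals of a quadrilateral, and exchanging them for two opposite sides strictly decreases the total length.) -/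
/-- Strict exchange inequality in the Euclidean plane: if `x` lies on both open segments
`(a,b)` and `(c,d)` and the four points `a, b, c, d` are not all collinear, then
`dist a c + dist b d < dist a b + dist c d`. -/
theorem crossing_exchange_lt (a b c d x : EuclideanSpace ℝ (Fin 2))
    (hab : x ∈ openSegment ℝ a b) (hcd : x ∈ openSegment ℝ c d)
    (hcol : ¬ Collinear ℝ ({a, b, c, d} : Set (EuclideanSpace ℝ (Fin 2)))) :
    dist a c + dist b d < dist a b + dist c d := by
  -- degenerate cases
  rcases eq_or_ne a b with rfl | hne_ab
  · rw [openSegment_same] at hab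
    rw [Set.mem_singleton_iff] at hab
    subst hab
    exact absurd ((collinear_insert_insert_of_mem_affineSpan_pair
      (mem_segment_iff_wbtw.1 (openSegment_subset_segment ℝ c d hcd)).mem_affineSpan
      (mem_segment_iff_wbtw.1 (openSegment_subset_segment ℝ c d hcd)).mem_affineSpan).subset
        (by intro y hy; simp at hy ⊢; tauto)) hcol
  rcases eq_or_ne c d with rfl | hne_cd
  · rw [openSegment_same] at hcd
    rw [Set.mem_singleton_iff] at hcd
    subst hcd
    exact absurd ((collinear_insert_insert_of_mem_affineSpan_pair
      (mem_segment_iff_wbtw.1 (openSegment_subset_segment ℝ a b hab)).mem_affineSpan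
      (mem_segment_iff_wbtw.1 (openSegment_subset_segment ℝ a b hab)).mem_affineSpan).subset
        (by intro y hy; simp at hy ⊢; tauto)) hcol
  have hxa : x ≠ a := by rintro rfl; exact hne_ab (left_mem_openSegment_iff.1 hab)
  have hxb : x ≠ b := by rintro rfl; exact hne_ab (right_mem_openSegment_iff.1 hab)
  have hxc : x ≠ c := by rintro rfl; exact hne_cd (left_mem_openSegment_iff.1 hcd)
  have hxd : x ≠ d := by rintro rfl; exact hne_cd (right_mem_openSegment_iff.1 hcd)
  have wab : Wbtw ℝ a x b := mem_segment_iff_wbtw.1 (openSegment_subset_segment ℝ a b hab)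
  have wcd : Wbtw ℝ c x d := mem_segment_iff_wbtw.1 (openSegment_subset_segment ℝ c d hcd)
  have hdab : dist a x + dist x b = dist a b := wab.dist_add_dist
  have hdcd : dist c x + dist x d = dist c d := wcd.dist_add_dist
  have t1 : dist a c ≤ dist a x + dist x c := dist_triangle a x c
  have t2 : dist b d ≤ dist b x + dist x d := dist_triangle b x d
  -- It suffices to show one triangle inequality is strict
  rcases lt_or_eq_of_le t1 with h1 | h1
  · have : dist a c + dist b d < (dist a x + dist x c) + (dist b x + dist x d) := by
      linarith
    calc dist a c + dist b d < (dist a x + dist x c) + (dist b x + dist x d) := this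
      _ = (dist a x + dist x b) + (dist c x + dist x d) := by
          rw [dist_comm b x, dist_comm x c]; ring
      _ = dist a b + dist c d := by rw [hdab, hdcd]
  rcases lt_or_eq_of_le t2 with h2 | h2
  · have : dist a c + dist b d < (dist a x + dist x c) + (dist b x + dist x d) := by
      linarith
    calc dist a c + dist b d < (dist a x + dist x c) + (dist b x + dist x d) := this
      _ = (dist a x + dist x b) + (dist c x + dist x d) := by
          rw [dist_comm b x, dist_comm x c]; ring
      _ = dist a b + dist c d := by rw [hdab, hdcd]
  -- both equalities: everything collinear, contradiction
  exfalso
  have wac : Wbtw ℝ a x c := dist_add_dist_eq_iff.1 h1.symm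
  have wbd : Wbtw ℝ b x d := dist_add_dist_eq_iff.1 h2.symm
  have sab : Sbtw ℝ a x b := ⟨wab, hxa, hxb⟩
  have sac : Sbtw ℝ a x c := ⟨wac, hxa, hxc⟩
  have sbd : Sbtw ℝ b x d := ⟨wbd, hxb, hxd⟩
  have hb : b ∈ line[ℝ, a, x] := sab.right_mem_affineSpan
  have hc : c ∈ line[ℝ, a, x] := sac.right_mem_affineSpan
  have hd : d ∈ line[ℝ, a, x] := by
    have hd' : d ∈ line[ℝ, b, x] := sbd.right_mem_affineSpan
    have hle : line[ℝ, b, x] ≤ line[ℝ, a, x] := by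
      apply affineSpan_le.2
      intro y hy
      rcases hy with rfl | hy
      · exact hb
      · rcases hy with rfl; exact right_mem_affineSpan_pair ℝ a y
    exact hle hd'
  exact hcol (((collinear_insert_insert_insert_of_mem_affineSpan_pair hb hc hd)).subset
    (by intro y hy; simp at hy ⊢; tauto))
end

section
/- Let n ≥ 1 and let p : {0,…,2n−1} → ℝ² be an injective family of points in the Euclidean plane such that no three of the points are collinear. Let σ be a fixed-point-free involution of {0,…,2n−1} (i.e. σ∘σ = id and σ(i) ≠ i for all i) that minimizes the total length ∑_{i} dist(p(i), p(σ(i))) among all fixed-point-free involutions of {0,…,2n−1}. Then the resulting perfect matching is non-crossing: for every i and every j ∉ {i, σ(i)}, the closed segments [p(i), p(σ(i))] and [p(j), p(σ(j))] are disjoint. -/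
/-- A minimum-total-length perfect matching (fixed-point-free involution) of `2n` points in
general position in the Euclidean plane is non-crossing. -/
theorem min_length_matching_noncrossing (n : ℕ) (hn : 1 ≤ n)
    (p : Fin (2 * n) → EuclideanSpace ℝ (Fin 2))
    (hinj : Function.Injective p)
    (hgen : ∀ i j k : Fin (2 * n), i ≠ j → i ≠ k → j ≠ k →
      ¬ Collinear ℝ ({p i, p j, p k} : Set (EuclideanSpace ℝ (Fin 2))))
    (σ : Equiv.Perm (Fin (2 * n)))
    (hinv : Function.Involutive σ) (hfpf : ∀ i, σ i ≠ i)
    (hmin : ∀ τ : Equiv.Perm (Fin (2 * n)), Function.Involutive τ → (∀ i, τ i ≠ i) →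
      (∑ i, dist (p i) (p (σ i))) ≤ ∑ i, dist (p i) (p (τ i))) :
    ∀ i j : Fin (2 * n), j ≠ i → j ≠ σ i →
      Disjoint (segment ℝ (p i) (p (σ i))) (segment ℝ (p j) (p (σ j))) := by
  intro i j hji hjsi
  by_contra hnd
  obtain ⟨x, hx1, hx2⟩ := Set.not_disjoint_iff.1 hnd
  -- distinctness of the four indices
  have hsii : σ i ≠ i := hfpf i
  have hsjj : σ j ≠ j := hfpf j
  have hsji : σ j ≠ i := fun h => hjsi (by rw [← h, hinv j])
  have hsjsi : σ j ≠ σ i := fun h => hji (σ.injective h)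
  -- betweenness from segment membership
  have hw1 : Wbtw ℝ (p i) x (p (σ i)) := mem_segment_iff_wbtw.1 hx1
  have hw2 : Wbtw ℝ (p j) x (p (σ j)) := mem_segment_iff_wbtw.1 hx2
  have e1 : dist (p i) x + dist x (p (σ i)) = dist (p i) (p (σ i)) := hw1.dist_add_dist
  have e2 : dist (p j) x + dist x (p (σ j)) = dist (p j) (p (σ j)) := hw2.dist_add_dist
  have t1 : dist (p i) (p j) ≤ dist (p i) x + dist x (p j) := dist_triangle _ _ _
  have t2 : dist (p (σ i)) (p (σ j)) ≤ dist (p (σ i)) x + dist x (p (σ j)) := dist_triangle _ _ _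
  -- the key strict inequality
  have hkey : dist (p i) (p j) + dist (p (σ i)) (p (σ j))
      < dist (p i) (p (σ i)) + dist (p j) (p (σ j)) := by
    have d1 : dist x (p j) = dist (p j) x := dist_comm _ _
    have d2 : dist (p (σ i)) x = dist x (p (σ i)) := dist_comm _ _
    have d3 : dist x (p (σ j)) = dist (p (σ j)) x := dist_comm _ _
    rcases lt_or_eq_of_le t1 with h1 | h1
    · linarith
    rcases lt_or_eq_of_le t2 with h2 | h2
    · linarith
    -- both triangle inequalities are equalities: get collinearity contradictions
    exfalso
    have hw3 : Wbtw ℝ (p i) x (p j) := dist_add_dist_eq_iff.1 h1.symm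
    have hw4 : Wbtw ℝ (p (σ i)) x (p (σ j)) := by
      refine dist_add_dist_eq_iff.1 ?_
      rw [← h2]
    by_cases hxi : x = p i
    · -- x = p i, so p σi, p i, p σj are collinear
      have : Collinear ℝ ({p (σ i), p i, p (σ j)} : Set (EuclideanSpace ℝ (Fin 2))) := by
        have := hw4.collinear
        rwa [hxi] at this
      exact hgen (σ i) i (σ j) hsii (Ne.symm hsjsi) (Ne.symm hsji) this
    · -- x ≠ p i : the lines through (p i, x) contain p σi and p j
      have c1 : Collinear ℝ ({p i, x, p (σ i)} : Set (EuclideanSpace ℝ (Fin 2))) := hw1.collinear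
      have c2 : Collinear ℝ ({p i, x, p j} : Set (EuclideanSpace ℝ (Fin 2))) := hw3.collinear
      have hne : p i ≠ x := Ne.symm hxi
      have m1 : p (σ i) ∈ line[ℝ, p i, x] :=
        c1.mem_affineSpan_of_mem_of_ne (by simp) (by simp) (by simp) hne
      have m2 : p j ∈ line[ℝ, p i, x] :=
        c2.mem_affineSpan_of_mem_of_ne (by simp) (by simp) (by simp) hne
      have c3 : Collinear ℝ ({p (σ i), p j, p i, x} : Set (EuclideanSpace ℝ (Fin 2))) :=
        collinear_insert_insert_of_mem_affineSpan_pair m1 m2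
      have c4 : Collinear ℝ ({p i, p (σ i), p j} : Set (EuclideanSpace ℝ (Fin 2))) :=
        c3.subset (by intro y hy; simp at hy; rcases hy with h|h|h <;> simp [h])
      exact hgen i (σ i) j (Ne.symm hsii) (Ne.symm hji) (Ne.symm hjsi) c4
  -- build the swapped matching τ
  set c : Equiv.Perm (Fin (2 * n)) := Equiv.swap j (σ i) with hc
  set τ : Equiv.Perm (Fin (2 * n)) := c * σ * c with hτ
  have hτ_apply : ∀ k, τ k = c (σ (c k)) := fun k => rfl
  have hci : c i = i := Equiv.swap_apply_of_ne_of_ne (Ne.symm hji) (Ne.symm hsii)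
  have hcsj : c (σ j) = σ j := Equiv.swap_apply_of_ne_of_ne hsjj hsjsi
  have hcj : c j = σ i := Equiv.swap_apply_left _ _
  have hcsi : c (σ i) = j := Equiv.swap_apply_right _ _
  have hτi : τ i = j := by rw [hτ_apply, hci, hcsi]
  have hτj : τ j = i := by rw [hτ_apply, hcj, hinv i, hci]
  have hτsi : τ (σ i) = σ j := by rw [hτ_apply, hcsi, hcsj]
  have hτsj : τ (σ j) = σ i := by rw [hτ_apply, hcsj, hinv j, hcj]
  have hτinv : Function.Involutive τ := by
    intro k
    rw [hτ_apply, hτ_apply, Equiv.swap_apply_self, hinv, Equiv.swap_apply_self]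
  have hτfpf : ∀ k, τ k ≠ k := by
    intro k hk
    rw [hτ_apply] at hk
    have : σ (c k) = c k := by
      have := congrArg c hk
      rwa [Equiv.swap_apply_self] at this
    exact hfpf (c k) this
  -- τ agrees with σ off the four indices
  have hoff : ∀ k, k ≠ i → k ≠ σ i → k ≠ j → k ≠ σ j → τ k = σ k := by
    intro k h1 h2 h3 h4
    have hck : c k = k := Equiv.swap_apply_of_ne_of_ne h3 h2
    have hsk1 : σ k ≠ j := fun h => h4 (by rw [← hinv k, h])
    have hsk2 : σ k ≠ σ i := fun h => h1 (σ.injective h)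
    rw [hτ_apply, hck, Equiv.swap_apply_of_ne_of_ne hsk1 hsk2]
  -- compare the total lengths
  have hsum : ∑ k, dist (p k) (p (τ k)) < ∑ k, dist (p k) (p (σ k)) := by
    classical
    set S : Finset (Fin (2 * n)) := {i, σ i, j, σ j} with hS
    have hsub : S ⊆ Finset.univ := Finset.subset_univ _
    have split : ∀ f : Fin (2 * n) → ℝ,
        ∑ k, f k = ∑ k ∈ Finset.univ \ S, f k + ∑ k ∈ S, f k :=
      fun f => (Finset.sum_sdiff hsub).symm
    rw [split (fun k => dist (p k) (p (τ k))), split (fun k => dist (p k) (p (σ k)))]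
    have hOffEq : ∑ k ∈ Finset.univ \ S, dist (p k) (p (τ k))
        = ∑ k ∈ Finset.univ \ S, dist (p k) (p (σ k)) := by
      refine Finset.sum_congr rfl fun k hk => ?_
      simp only [Finset.mem_sdiff, hS, Finset.mem_insert, Finset.mem_singleton] at hk
      push_neg at hk
      obtain ⟨-, h1, h2, h3, h4⟩ := hk
      rw [hoff k h1 h2 h3 h4]
    rw [hOffEq]
    have hmem1 : i ∉ ({σ i, j, σ j} : Finset (Fin (2 * n))) := by
      simp only [Finset.mem_insert, Finset.mem_singleton]
      push_neg
      exact ⟨Ne.symm hsii, Ne.symm hji, Ne.symm hsji⟩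
    have hmem2 : σ i ∉ ({j, σ j} : Finset (Fin (2 * n))) := by
      simp only [Finset.mem_insert, Finset.mem_singleton]
      push_neg
      exact ⟨Ne.symm hjsi, Ne.symm hsjsi⟩
    have hmem3 : j ∉ ({σ j} : Finset (Fin (2 * n))) := by
      simp only [Finset.mem_singleton]
      exact Ne.symm hsjj
    have hSsum1 : ∑ k ∈ S, dist (p k) (p (τ k))
        = dist (p i) (p j) + dist (p (σ i)) (p (σ j)) + dist (p j) (p i)
          + dist (p (σ j)) (p (σ i)) := by
      rw [hS]
      rw [Finset.sum_insert hmem1, Finset.sum_insert hmem2, Finset.sum_insert hmem3,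
        Finset.sum_singleton]
      rw [hτi, hτsi, hτj, hτsj]
      ring
    have hSsum2 : ∑ k ∈ S, dist (p k) (p (σ k))
        = dist (p i) (p (σ i)) + dist (p (σ i)) (p i) + dist (p j) (p (σ j))
          + dist (p (σ j)) (p j) := by
      rw [hS]
      rw [Finset.sum_insert hmem1, Finset.sum_insert hmem2, Finset.sum_insert hmem3,
        Finset.sum_singleton]
      rw [hinv i, hinv j]
      ring
    rw [hSsum1, hSsum2]
    have d1 : dist (p j) (p i) = dist (p i) (p j) := dist_comm _ _
    have d2 : dist (p (σ j)) (p (σ i)) = dist (p (σ i)) (p (σ j)) := dist_comm _ _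
    have d3 : dist (p (σ i)) (p i) = dist (p i) (p (σ i)) := dist_comm _ _
    have d4 : dist (p (σ j)) (p j) = dist (p j) (p (σ j)) := dist_comm _ _
    linarith
  exact absurd (hmin τ hτinv hτfpf) (not_le.2 hsum)
end

section
/- Let n ≥ 1 and let p : {0,…,2n−1} → ℝ² be an injective family of points in the Euclidean plane such that no three of the points are collinear. Then there exists a perfect non-crossing matching of the points: a fixed-point-free involution σ of {0,…,2n−1} such that for every i and every j ∉ {i, σ(i)}, the closed segments [p(i), p(σ(i))] and [p(j), p(σ(j))] are disjoint. -/
open Finset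

/-- Key geometric inequality: if segments `[a,b]` and `[c,d]` meet at `x`, and suitable
triples are not collinear, then rematching strictly decreases total length. -/
lemma quad_dist_lt {E : Type*} [NormedAddCommGroup E] [NormedSpace ℝ E]
    [StrictConvexSpace ℝ E] {a b c d x : E}
    (hx1 : x ∈ segment ℝ a b) (hx2 : x ∈ segment ℝ c d)
    (hacd : ¬ Collinear ℝ ({a, c, d} : Set E))
    (habd : ¬ Collinear ℝ ({a, b, d} : Set E)) :
    dist a d + dist b c < dist a b + dist c d := by
  have w1 : Wbtw ℝ a x b := mem_segment_iff_wbtw.mp hx1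
  have w2 : Wbtw ℝ c x d := mem_segment_iff_wbtw.mp hx2
  have e1 : dist a x + dist x b = dist a b := w1.dist_add_dist
  have e2 : dist c x + dist x d = dist c d := w2.dist_add_dist
  have t1 : dist a d ≤ dist a x + dist x d := dist_triangle _ _ _
  have t2 : dist b c ≤ dist b x + dist x c := dist_triangle _ _ _
  by_contra hlt
  push_neg at hlt
  have hbx : dist b x = dist x b := dist_comm _ _
  have hxc : dist x c = dist c x := dist_comm _ _
  have heq : dist a x + dist x d = dist a d := by linarith
  have wad : Wbtw ℝ a x d := dist_add_dist_eq_iff.mp heq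
  have hxa : x ≠ a := by
    rintro rfl
    exact hacd (by
      have := w2.collinear
      rwa [Set.insert_comm] at this)
  have hb : b ∈ line[ℝ, a, x] :=
    w1.collinear.mem_affineSpan_of_mem_of_ne
      (Set.mem_insert _ _) (by simp) (by simp) (Ne.symm hxa)
  have hd : d ∈ line[ℝ, a, x] :=
    wad.collinear.mem_affineSpan_of_mem_of_ne
      (Set.mem_insert _ _) (by simp) (by simp) (Ne.symm hxa)
  have hcol : Collinear ℝ ({b, d, a, x} : Set E) :=
    collinear_insert_insert_of_mem_affineSpan_pair hb hd
  exact habd (hcol.subset (by intro y hy; simp at hy ⊢; tauto))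

/-- Any `2n` points in general position in the Euclidean plane admit a perfect non-crossing
matching, encoded as a fixed-point-free involution of the index set. -/
theorem exists_noncrossing_perfect_matching (n : ℕ) (hn : 1 ≤ n)
    (p : Fin (2 * n) → EuclideanSpace ℝ (Fin 2))
    (hinj : Function.Injective p)
    (hgen : ∀ i j k : Fin (2 * n), i ≠ j → i ≠ k → j ≠ k →
      ¬ Collinear ℝ ({p i, p j, p k} : Set (EuclideanSpace ℝ (Fin 2)))) :
    ∃ σ : Equiv.Perm (Fin (2 * n)), Function.Involutive σ ∧ (∀ i, σ i ≠ i) ∧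
      ∀ i j : Fin (2 * n), j ≠ i → j ≠ σ i →
        Disjoint (segment ℝ (p i) (p (σ i))) (segment ℝ (p j) (p (σ j))) := by
  classical
  haveI : NeZero (2 * n) := ⟨by omega⟩
  set F : Equiv.Perm (Fin (2 * n)) → ℝ := fun σ => ∑ k, dist (p k) (p (σ k)) with hFdef
  set good : Equiv.Perm (Fin (2 * n)) → Prop :=
    fun σ => Function.Involutive σ ∧ ∀ i, σ i ≠ i with hgood
  -- a witness: translation by n
  have hwit : ∃ σ, good σ := by
    set e : Fin (2 * n) := ⟨n, by omega⟩ with he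
    have hee : e + e = 0 := by
      apply Fin.ext
      rw [he, Fin.add_def]
      simp
      have h : n + n = 2 * n := by ring
      rw [h, Nat.mod_self]
    refine ⟨Equiv.addLeft e, ?_, ?_⟩
    · intro k
      show e + (e + k) = k
      rw [← add_assoc, hee, zero_add]
    · intro k h
      have : e + k = k := h
      have he0 : e = 0 := by
        have := add_right_cancel (a := e) (b := k) (c := 0) (by simpa using this)
        simpa using this
      have : (e : Fin (2 * n)).val = 0 := by rw [he0]; rfl
      simp [he] at this
      omega
  obtain ⟨σ₀, hσ₀⟩ := hwit
  obtain ⟨σ, hσmem, hmin⟩ :=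
    Finset.exists_min_image (Finset.univ.filter good) F
      ⟨σ₀, by simpa using hσ₀⟩
  have hσgood : good σ := by simpa using hσmem
  obtain ⟨hinv, hfpf⟩ := hσgood
  refine ⟨σ, hinv, hfpf, ?_⟩
  intro i j hji hjσi
  by_contra hnd
  obtain ⟨x, hx1, hx2⟩ := Set.not_disjoint_iff.mp hnd
  -- index distinctness
  have hij : i ≠ j := Ne.symm hji
  have hσii : σ i ≠ i := hfpf i
  have hσjj : σ j ≠ j := hfpf j
  have hσji : σ j ≠ i := by
    intro h
    apply hjσi
    rw [← h, hinv j]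
  have hiσj : i ≠ σ j := Ne.symm hσji
  have hσjσi : σ j ≠ σ i := fun h => hij (σ.injective h).symm
  have hσij : σ i ≠ j := Ne.symm hjσi
  -- the uncrossed permutation
  set τ : Equiv.Perm (Fin (2 * n)) := Equiv.swap i j with hτ
  set σ' : Equiv.Perm (Fin (2 * n)) := τ * σ * τ with hσ'
  have happ : ∀ k, σ' k = τ (σ (τ k)) := fun k => rfl
  have hττ : ∀ k, τ (τ k) = k := fun k => Equiv.swap_apply_self _ _ _
  have hinv' : Function.Involutive σ' := by
    intro k
    simp only [happ, hττ, hinv (τ k)]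
  have hfpf' : ∀ k, σ' k ≠ k := by
    intro k h
    have h2 : σ (τ k) = τ k := by
      have := congrArg τ h
      rwa [happ, hττ] at this
    exact hfpf (τ k) h2
  have hgood' : good σ' := ⟨hinv', hfpf'⟩
  have hσ'i : σ' i = σ j := by
    rw [happ, hτ, Equiv.swap_apply_left, Equiv.swap_apply_of_ne_of_ne hσji hσjj]
  have hσ'j : σ' j = σ i := by
    rw [happ, hτ, Equiv.swap_apply_right, Equiv.swap_apply_of_ne_of_ne hσii hσij]
  have hσ'σi : σ' (σ i) = j := by
    rw [happ, hτ, Equiv.swap_apply_of_ne_of_ne hσii hσij, hinv i, Equiv.swap_apply_left]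
  have hσ'σj : σ' (σ j) = i := by
    rw [happ, hτ, Equiv.swap_apply_of_ne_of_ne hσji hσjj, hinv j, Equiv.swap_apply_right]
  set s : Finset (Fin (2 * n)) := {i, j, σ i, σ j} with hs
  have hout : ∀ k ∉ s, σ' k = σ k := by
    intro k hk
    simp only [hs, Finset.mem_insert, Finset.mem_singleton, not_or] at hk
    obtain ⟨hki, hkj, hkσi, hkσj⟩ := hk
    have h1 : τ k = k := Equiv.swap_apply_of_ne_of_ne hki hkj
    have h2 : σ k ≠ i := fun h => hkσi (by rw [← h, hinv k])
    have h3 : σ k ≠ j := fun h => hkσj (by rw [← h, hinv k])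
    rw [happ, h1, Equiv.swap_apply_of_ne_of_ne h2 h3]
  -- the key strict inequality
  have hkey : dist (p i) (p (σ j)) + dist (p (σ i)) (p j)
      < dist (p i) (p (σ i)) + dist (p j) (p (σ j)) :=
    quad_dist_lt hx1 hx2 (hgen i j (σ j) hij hiσj (Ne.symm hσjj))
      (hgen i (σ i) (σ j) (Ne.symm hσii) (Ne.symm hσji) hσjσi.symm)
  -- sum over s
  have hi_mem : i ∉ ({j, σ i, σ j} : Finset _) := by simp [hij, Ne.symm hσii, hiσj]
  have hj_mem : j ∉ ({σ i, σ j} : Finset _) := by simp [hjσi, Ne.symm hσjj]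
  have hσi_mem : σ i ∉ ({σ j} : Finset _) := by simp [Ne.symm hσjσi]
  have hsum' : ∑ k ∈ s, dist (p k) (p (σ' k)) =
      dist (p i) (p (σ j)) + (dist (p j) (p (σ i)) +
        (dist (p (σ i)) (p j) + dist (p (σ j)) (p i))) := by
    rw [hs]
    rw [Finset.sum_insert hi_mem, Finset.sum_insert hj_mem, Finset.sum_insert hσi_mem,
      Finset.sum_singleton, hσ'i, hσ'j, hσ'σi, hσ'σj]
  have hsum : ∑ k ∈ s, dist (p k) (p (σ k)) =
      dist (p i) (p (σ i)) + (dist (p j) (p (σ j)) +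
        (dist (p (σ i)) (p i) + dist (p (σ j)) (p j))) := by
    rw [hs]
    rw [Finset.sum_insert hi_mem, Finset.sum_insert hj_mem, Finset.sum_insert hσi_mem,
      Finset.sum_singleton, hinv i, hinv j]
  have hFlt : F σ' < F σ := by
    simp only [hFdef]
    have hsplit : ∀ g : Fin (2 * n) → ℝ,
        ∑ k, g k = ∑ k ∈ s, g k + ∑ k ∈ sᶜ, g k := by
      intro g
      rw [Finset.sum_add_sum_compl]
    rw [hsplit (fun k => dist (p k) (p (σ' k))), hsplit (fun k => dist (p k) (p (σ k)))]
    have hcompl : ∑ k ∈ sᶜ, dist (p k) (p (σ' k)) = ∑ k ∈ sᶜ, dist (p k) (p (σ k)) := by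
      apply Finset.sum_congr rfl
      intro k hk
      rw [hout k (Finset.mem_compl.mp hk)]
    rw [hcompl]
    have d1 : dist (p (σ i)) (p j) = dist (p j) (p (σ i)) := dist_comm _ _
    have d2 : dist (p (σ j)) (p i) = dist (p i) (p (σ j)) := dist_comm _ _
    have d3 : dist (p (σ i)) (p i) = dist (p i) (p (σ i)) := dist_comm _ _
    have d4 : dist (p (σ j)) (p j) = dist (p j) (p (σ j)) := dist_comm _ _
    have := hkey
    rw [hsum', hsum]
    linarith [hkey, d1, d2, d3, d4]
  have := hmin σ' (by simpa using hgood')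
  linarith
end

section
/- Let n ≥ 1 and let r : {0,…,n−1} → ℝ² (red points) and b : {0,…,n−1} → ℝ² (blue points) be families of points in the Euclidean plane such that all 2n points are pairwise distinct and no three of the 2n points are collinear. Then there exists a perfect non-crossing bichromatic matching: a bijection f of {0,…,n−1} such that for all i ≠ j, the closed segments [r(i), b(f(i))] and [r(j), b(f(j))] are disjoint. -/
/-- Any `n` red and `n` blue points, all `2n` pairwise distinct and in general position in
the Euclidean plane, admit a perfect non-crossing bichromatic matching, encoded as a
bijection `f` of the index set pairing red point `i` with blue point `f i`. -/
theorem exists_noncrossing_bichromatic_matching (n : ℕ) (hn : 1 ≤ n)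
    (r b : Fin n → EuclideanSpace ℝ (Fin 2))
    (hinj : Function.Injective (Sum.elim r b))
    (hgen : ∀ x y z : Fin n ⊕ Fin n, x ≠ y → x ≠ z → y ≠ z →
      ¬ Collinear ℝ ({Sum.elim r b x, Sum.elim r b y, Sum.elim r b z} :
        Set (EuclideanSpace ℝ (Fin 2)))) :
    ∃ f : Equiv.Perm (Fin n), ∀ i j : Fin n, i ≠ j →
      Disjoint (segment ℝ (r i) (b (f i))) (segment ℝ (r j) (b (f j))) := by
  classical
  -- total length of a matching
  set F : Equiv.Perm (Fin n) → ℝ := fun f => ∑ k, dist (r k) (b (f k)) with hF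
  obtain ⟨f, -, hmin⟩ := Finset.exists_min_image (Finset.univ : Finset (Equiv.Perm (Fin n))) F
    ⟨1, Finset.mem_univ 1⟩
  refine ⟨f, fun i j hij => ?_⟩
  by_contra hnd
  obtain ⟨p, hp1, hp2⟩ := Set.not_disjoint_iff.mp hnd
  have w1 : Wbtw ℝ (r i) p (b (f i)) := mem_segment_iff_wbtw.mp hp1
  have w2 : Wbtw ℝ (r j) p (b (f j)) := mem_segment_iff_wbtw.mp hp2
  have hfij : f i ≠ f j := fun h => hij (f.injective h)
  -- the two triangle inequalities cannot both be equalities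
  have hstrict : dist (r i) (b (f j)) < dist (r i) p + dist p (b (f j)) ∨
      dist (r j) (b (f i)) < dist (r j) p + dist p (b (f i)) := by
    by_contra h
    push_neg at h
    obtain ⟨h1, h2⟩ := h
    have e1 : dist (r i) p + dist p (b (f j)) = dist (r i) (b (f j)) :=
      le_antisymm h1 (dist_triangle _ _ _)
    have e2 : dist (r j) p + dist p (b (f i)) = dist (r j) (b (f i)) :=
      le_antisymm h2 (dist_triangle _ _ _)
    have w3 : Wbtw ℝ (r i) p (b (f j)) := dist_add_dist_eq_iff.mp e1
    have w4 : Wbtw ℝ (r j) p (b (f i)) := dist_add_dist_eq_iff.mp e2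
    by_cases hpri : p = r i
    · -- then r i lies on the segment [r j, b (f j)]
      subst hpri
      have hc : Collinear ℝ ({r j, r i, b (f j)} : Set (EuclideanSpace ℝ (Fin 2))) := w2.collinear
      refine hgen (Sum.inl j) (Sum.inl i) (Sum.inr (f j)) ?_ ?_ ?_ ?_
      · simpa using fun h => hij h.symm
      · simp
      · simp
      · simpa using hc
    · have c1 : Collinear ℝ ({r i, p, b (f i)} : Set (EuclideanSpace ℝ (Fin 2))) := w1.collinear
      have c3 : Collinear ℝ ({r i, p, b (f j)} : Set (EuclideanSpace ℝ (Fin 2))) := w3.collinear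
      have hne : r i ≠ p := fun h => hpri h.symm
      have hbfi : b (f i) ∈ line[ℝ, r i, p] :=
        c1.mem_affineSpan_of_mem_of_ne (by simp) (by simp) (by simp) hne
      have hbfj : b (f j) ∈ line[ℝ, r i, p] :=
        c3.mem_affineSpan_of_mem_of_ne (by simp) (by simp) (by simp) hne
      have hc : Collinear ℝ ({r i, b (f i), b (f j)} : Set (EuclideanSpace ℝ (Fin 2))) :=
        collinear_triple_of_mem_affineSpan_pair (left_mem_affineSpan_pair ℝ _ _) hbfi hbfj
      refine hgen (Sum.inl i) (Sum.inr (f i)) (Sum.inr (f j)) (by simp) (by simp) ?_ ?_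
      · simpa using hfij
      · simpa using hc
  -- swapping i and j strictly shortens the matching
  have e1 : dist (r i) p + dist p (b (f i)) = dist (r i) (b (f i)) := w1.dist_add_dist
  have e2 : dist (r j) p + dist p (b (f j)) = dist (r j) (b (f j)) := w2.dist_add_dist
  have t1 : dist (r i) (b (f j)) ≤ dist (r i) p + dist p (b (f j)) := dist_triangle _ _ _
  have t2 : dist (r j) (b (f i)) ≤ dist (r j) p + dist p (b (f i)) := dist_triangle _ _ _
  have key : dist (r i) (b (f j)) + dist (r j) (b (f i)) <
      dist (r i) (b (f i)) + dist (r j) (b (f j)) := by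
    rcases hstrict with h | h <;> linarith
  set g : Equiv.Perm (Fin n) := (Equiv.swap i j).trans f with hg
  have hFg : F g < F f := by
    have hsplit : ∀ w : Fin n → ℝ, ∑ k, w k = w i + (w j + ∑ k ∈ (Finset.univ.erase i).erase j, w k) := by
      intro w
      rw [← Finset.add_sum_erase _ w (Finset.mem_univ i),
        ← Finset.add_sum_erase _ w (Finset.mem_erase.mpr ⟨hij.symm, Finset.mem_univ j⟩)]
    have hrest : ∑ k ∈ (Finset.univ.erase i).erase j, dist (r k) (b (g k)) =
        ∑ k ∈ (Finset.univ.erase i).erase j, dist (r k) (b (f k)) := by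
      refine Finset.sum_congr rfl fun k hk => ?_
      simp only [Finset.mem_erase] at hk
      have : g k = f k := by
        simp [hg, Equiv.swap_apply_of_ne_of_ne hk.2.1 hk.1]
      rw [this]
    have hgi : g i = f j := by simp [hg]
    have hgj : g j = f i := by simp [hg]
    rw [hF]
    simp only
    rw [hsplit (fun k => dist (r k) (b (g k))), hsplit (fun k => dist (r k) (b (f k)))]
    simp only [hgi, hgj, hrest]
    linarith
  exact absurd (hmin g (Finset.mem_univ g)) (not_le.mpr hFg)
end

section
/- Let n ≥ 1 and let M be a set of pairwise-disjoint unordered pairs {a,b} of elements of {0,…,2n−1} such that (i) for every pair {a,b} ∈ M with a < b, the difference b − a is odd (equivalently, a and b have opposite parities), and (ii) no two pairs of M cross, i.e. there are no pairs {a,b}, {c,d} ∈ M with a < c < b < d. Then M extends to a perfect non-crossing matching: there exists a fixed-point-free involution σ of {0,…,2n−1} with no indices i, j satisfying i < j < σ(i) < σ(j), such that σ(a) = b for every {a,b} ∈ M. (Any partial non-crossing matching of points in convex position that only matches points of opposite parity can be completed to a perfect non-crossing matching; this is the correctness core of the ASAPMatching algorithm.) -/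
private lemma glue (S : Finset ℕ) (a b : ℕ) (ha : a ∈ S) (hb : b ∈ S) (hab : a < b)
    (fI fO : ℕ → ℕ)
    (hImem : ∀ x ∈ S, a < x → x < b →
      fI x ∈ S ∧ a < fI x ∧ fI x < b ∧ fI (fI x) = x ∧ fI x ≠ x)
    (hOmem : ∀ x ∈ S, (x < a ∨ b < x) →
      fO x ∈ S ∧ (fO x < a ∨ b < fO x) ∧ fO (fO x) = x ∧ fO x ≠ x)
    (hInc : ∀ i ∈ S, ∀ j ∈ S, (a < i ∧ i < b) → (a < j ∧ j < b) →
      i < j → j < fI i → fI i < fI j → False)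
    (hOnc : ∀ i ∈ S, ∀ j ∈ S, (i < a ∨ b < i) → (j < a ∨ b < j) →
      i < j → j < fO i → fO i < fO j → False) :
    ∃ g : ℕ → ℕ,
      (∀ x ∈ S, g x ∈ S ∧ g (g x) = x ∧ g x ≠ x) ∧
      (∀ x, x ∉ S → g x = x) ∧
      g a = b ∧
      (∀ x ∈ S, a < x → x < b → g x = fI x) ∧
      (∀ x ∈ S, (x < a ∨ b < x) → g x = fO x) ∧
      (∀ i ∈ S, ∀ j ∈ S, i < j → j < g i → g i < g j → False) := by
  classical
  set g : ℕ → ℕ := fun x =>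
    if x ∈ S then
      (if x = a then b else if x = b then a else if a < x ∧ x < b then fI x else fO x)
    else x with hgdef
  have hga : g a = b := by simp [hgdef, ha]
  have hgb : g b = a := by simp [hgdef, hb, hab.ne']
  have hgI : ∀ x ∈ S, a < x → x < b → g x = fI x := by
    intro x hx h1 h2
    have e1 : x ≠ a := by omega
    have e2 : x ≠ b := by omega
    simp only [hgdef]
    rw [if_pos hx, if_neg e1, if_neg e2, if_pos ⟨h1, h2⟩]
  have hgO : ∀ x ∈ S, (x < a ∨ b < x) → g x = fO x := by
    intro x hx h
    have e1 : x ≠ a := by omega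
    have e2 : x ≠ b := by omega
    have e3 : ¬(a < x ∧ x < b) := by omega
    simp only [hgdef]
    rw [if_pos hx, if_neg e1, if_neg e2, if_neg e3]
  refine ⟨g, ?_, ?_, hga, hgI, hgO, ?_⟩
  · intro x hx
    rcases eq_or_ne x a with hxa | hxa
    · rw [hxa, hga, hgb]; exact ⟨hb, rfl, by omega⟩
    rcases eq_or_ne x b with hxb | hxb
    · rw [hxb, hgb, hga]; exact ⟨ha, rfl, by omega⟩
    by_cases hxI : a < x ∧ x < b
    · obtain ⟨h1, h2, h3, h4, h5⟩ := hImem x hx hxI.1 hxI.2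
      rw [hgI x hx hxI.1 hxI.2, hgI _ h1 h2 h3, h4]
      exact ⟨h1, rfl, h5⟩
    · have hxO : x < a ∨ b < x := by omega
      obtain ⟨h1, h2, h3, h4⟩ := hOmem x hx hxO
      rw [hgO x hx hxO, hgO _ h1 h2, h3]
      exact ⟨h1, rfl, h4⟩
  · intro x hx; simp [hgdef, hx]
  · -- noncrossing
    intro i hi j hj hij h1 h2
    rcases eq_or_ne i a with hia | hia
    · rw [hia] at hij h1 h2
      rw [hga] at h1 h2
      have hjI : a < j ∧ j < b := ⟨hij, h1⟩
      have := (hImem j hj hjI.1 hjI.2).2.2.1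
      rw [hgI j hj hjI.1 hjI.2] at h2; omega
    rcases eq_or_ne i b with hib | hib
    · rw [hib] at h1 hij; rw [hgb] at h1; omega
    by_cases hiI : a < i ∧ i < b
    · obtain ⟨q1, q2, q3, q4, q5⟩ := hImem i hi hiI.1 hiI.2
      rw [hgI i hi hiI.1 hiI.2] at h1 h2
      have hjI : a < j ∧ j < b := by omega
      rw [hgI j hj hjI.1 hjI.2] at h2
      exact hInc i hi j hj hiI hjI hij h1 h2
    · have hiO : i < a ∨ b < i := by omega
      obtain ⟨q1, q2, q3, q4⟩ := hOmem i hi hiO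
      rw [hgO i hi hiO] at h1 h2
      rcases eq_or_ne j a with hja | hja
      · rw [hja] at hij h1 h2
        rw [hga] at h2
        -- i < a, fO i > a hence fO i > b, contradiction with fO i < b
        omega
      rcases eq_or_ne j b with hjb | hjb
      · rw [hjb] at hij h1 h2; rw [hgb] at h2; omega
      by_cases hjI : a < j ∧ j < b
      · -- i < a (since i ∈ O and i < j < b), fO i > j > a so fO i > b, but fI j < b
        have := (hImem j hj hjI.1 hjI.2).2.2.1
        rw [hgI j hj hjI.1 hjI.2] at h2
        omega
      · have hjO : j < a ∨ b < j := by omega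
        rw [hgO j hj hjO] at h2
        exact hOnc i hi j hj hiO hjO hij h1 h2

private lemma key (N : ℕ) : ∀ S : Finset ℕ, S.card ≤ N → ∀ M : Set (ℕ × ℕ),
    (∀ e ∈ M, e.1 ∈ S ∧ e.2 ∈ S ∧ e.1 < e.2) →
    (∀ e ∈ M, ∀ f ∈ M, e ≠ f → e.1 ≠ f.1 ∧ e.1 ≠ f.2 ∧ e.2 ≠ f.1 ∧ e.2 ≠ f.2) →
    (∀ e ∈ M, ∀ f ∈ M, ¬(e.1 < f.1 ∧ f.1 < e.2 ∧ e.2 < f.2)) →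
    (∀ e ∈ M, Even ((S.filter (fun x => e.1 < x ∧ x < e.2)).card)) →
    Even S.card →
    ∃ g : ℕ → ℕ, (∀ x ∈ S, g x ∈ S ∧ g (g x) = x ∧ g x ≠ x) ∧
      (∀ x, x ∉ S → g x = x) ∧
      (∀ e ∈ M, g e.1 = e.2) ∧
      (∀ i ∈ S, ∀ j ∈ S, i < j → j < g i → g i < g j → False) := by
  classical
  induction N with
  | zero =>
    intro S hS M hord hdisj hnc hev hevS
    have hSe : S = ∅ := Finset.card_eq_zero.mp (Nat.le_zero.mp hS)
    subst hSe
    exact ⟨id, fun x hx => absurd hx (by simp), fun x _ => rfl,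
      fun e he => absurd (hord e he).1 (by simp), fun i hi => absurd hi (by simp)⟩
  | succ N IH =>
    intro S hS M hord hdisj hnc hev hevS
    rcases Finset.eq_empty_or_nonempty S with hSe | hne
    · subst hSe
      exact ⟨id, fun x hx => absurd hx (by simp), fun x _ => rfl,
        fun e he => absurd (hord e he).1 (by simp), fun i hi => absurd hi (by simp)⟩
    -- main splitting step
    have main : ∀ a b : ℕ, a ∈ S → b ∈ S → a < b →
        (∀ e ∈ M, e = (a, b) ∨ (a < e.1 ∧ e.2 < b) ∨ b < e.1) →
        Even ((S.filter (fun x => a < x ∧ x < b)).card) →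
        ∃ g : ℕ → ℕ, (∀ x ∈ S, g x ∈ S ∧ g (g x) = x ∧ g x ≠ x) ∧
          (∀ x, x ∉ S → g x = x) ∧
          (∀ e ∈ M, g e.1 = e.2) ∧
          (∀ i ∈ S, ∀ j ∈ S, i < j → j < g i → g i < g j → False) := by
      intro a b ha hb hab hsplit hIeven
      set I : Finset ℕ := S.filter (fun x => a < x ∧ x < b) with hIdef
      set O : Finset ℕ := S.filter (fun x => x < a ∨ b < x) with hOdef
      have hIsub : I ⊆ S := Finset.filter_subset _ _
      have hOsub : O ⊆ S := Finset.filter_subset _ _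
      have haI : a ∉ I := by simp [hIdef]
      have haO : a ∉ O := by simp [hOdef]; omega
      have hbO : b ∉ O := by simp [hOdef]; omega
      have hIcard : I.card ≤ N := by
        have hss : I ⊂ S := ⟨hIsub, fun h => haI (h ha)⟩
        have := Finset.card_lt_card hss
        omega
      have hOcard : O.card ≤ N := by
        have hss : O ⊂ S := ⟨hOsub, fun h => haO (h ha)⟩
        have := Finset.card_lt_card hss
        omega
      have hOeven : Even O.card := by
        have hcompl : S.filter (fun x => ¬(a < x ∧ x < b)) = insert a (insert b O) := by
          ext x
          simp only [Finset.mem_filter, Finset.mem_insert, hOdef]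
          constructor
          · rintro ⟨hx, h⟩
            by_cases h1 : x = a
            · exact Or.inl h1
            by_cases h2 : x = b
            · exact Or.inr (Or.inl h2)
            · exact Or.inr (Or.inr ⟨hx, by omega⟩)
          · rintro (rfl | rfl | ⟨hx, h⟩)
            · exact ⟨ha, by omega⟩
            · exact ⟨hb, by omega⟩
            · exact ⟨hx, by omega⟩
        have hsum := Finset.card_filter_add_card_filter_not
          (s := S) (p := fun x => a < x ∧ x < b)
        rw [hcompl] at hsum
        have hcard2 : (insert a (insert b O)).card = O.card + 2 := by
          rw [Finset.card_insert_of_notMem (by simp [haO]; omega),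
            Finset.card_insert_of_notMem hbO]
        rw [hcard2] at hsum
        rw [← hIdef] at hsum
        rw [Nat.even_iff] at hevS hIeven ⊢
        omega
      set MI : Set (ℕ × ℕ) := {e ∈ M | a < e.1 ∧ e.2 < b} with hMIdef
      set MO : Set (ℕ × ℕ) := {e ∈ M | b < e.1} with hMOdef
      have hMIsub : MI ⊆ M := fun e he => he.1
      have hMOsub : MO ⊆ M := fun e he => he.1
      obtain ⟨fI, hIA, hIB, hIC, hID⟩ := IH I hIcard MI
        (by
          intro e he
          obtain ⟨he', h1, h2⟩ := he
          obtain ⟨q1, q2, q3⟩ := hord e he'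
          exact ⟨Finset.mem_filter.mpr ⟨q1, h1, by omega⟩,
            Finset.mem_filter.mpr ⟨q2, by omega, h2⟩, q3⟩)
        (fun e he f hf => hdisj e (hMIsub he) f (hMIsub hf))
        (fun e he f hf => hnc e (hMIsub he) f (hMIsub hf))
        (by
          intro e he
          obtain ⟨he', h1, h2⟩ := he
          have heq : I.filter (fun x => e.1 < x ∧ x < e.2)
              = S.filter (fun x => e.1 < x ∧ x < e.2) := by
            rw [hIdef, Finset.filter_filter]
            apply Finset.filter_congr
            intro x hx
            constructor
            · intro h; exact h.2
            · intro h; exact ⟨by omega, h⟩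
          rw [heq]
          exact hev e he')
        hIeven
      obtain ⟨fO, hOA, hOB, hOC, hOD⟩ := IH O hOcard MO
        (by
          intro e he
          obtain ⟨he', h1⟩ := he
          obtain ⟨q1, q2, q3⟩ := hord e he'
          exact ⟨Finset.mem_filter.mpr ⟨q1, Or.inr h1⟩,
            Finset.mem_filter.mpr ⟨q2, Or.inr (by omega)⟩, q3⟩)
        (fun e he f hf => hdisj e (hMOsub he) f (hMOsub hf))
        (fun e he f hf => hnc e (hMOsub he) f (hMOsub hf))
        (by
          intro e he
          obtain ⟨he', h1⟩ := he
          have heq : O.filter (fun x => e.1 < x ∧ x < e.2)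
              = S.filter (fun x => e.1 < x ∧ x < e.2) := by
            rw [hOdef, Finset.filter_filter]
            apply Finset.filter_congr
            intro x hx
            constructor
            · intro h; exact h.2
            · intro h; exact ⟨Or.inr (by omega), h⟩
          rw [heq]
          exact hev e he')
        hOeven
      obtain ⟨g, hgmem, hgout, hga, hgI, hgO, hgnc⟩ := glue S a b ha hb hab fI fO
        (by
          intro x hx h1 h2
          obtain ⟨p1, p2, p3⟩ := hIA x (Finset.mem_filter.mpr ⟨hx, h1, h2⟩)
          rw [hIdef, Finset.mem_filter] at p1
          exact ⟨p1.1, p1.2.1, p1.2.2, p2, p3⟩)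
        (by
          intro x hx h
          obtain ⟨p1, p2, p3⟩ := hOA x (Finset.mem_filter.mpr ⟨hx, h⟩)
          rw [hOdef, Finset.mem_filter] at p1
          exact ⟨p1.1, p1.2, p2, p3⟩)
        (by
          intro i hi j hj hiI hjI hij h1 h2
          exact hID i (Finset.mem_filter.mpr ⟨hi, hiI⟩) j
            (Finset.mem_filter.mpr ⟨hj, hjI⟩) hij h1 h2)
        (by
          intro i hi j hj hiO hjO hij h1 h2
          exact hOD i (Finset.mem_filter.mpr ⟨hi, hiO⟩) j
            (Finset.mem_filter.mpr ⟨hj, hjO⟩) hij h1 h2)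
      refine ⟨g, hgmem, hgout, ?_, hgnc⟩
      intro e he
      rcases hsplit e he with heq | ⟨h1, h2⟩ | h1
      · rw [heq]; exact hga
      · obtain ⟨q1, q2, q3⟩ := hord e he
        rw [hgI e.1 q1 h1 (by omega)]
        exact hIC e ⟨he, h1, h2⟩
      · obtain ⟨q1, q2, q3⟩ := hord e he
        rw [hgO e.1 q1 (Or.inr h1)]
        exact hOC e ⟨he, h1⟩
    -- now find the pair (a, b) to split along
    set m := S.min' hne with hmdef
    have hmS : m ∈ S := S.min'_mem hne
    have hmle : ∀ x ∈ S, m ≤ x := fun x hx => S.min'_le x hx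
    by_cases hm : ∃ e ∈ M, e.1 = m
    · obtain ⟨e0, he0, he0m⟩ := hm
      obtain ⟨q1, q2, q3⟩ := hord e0 he0
      apply main m e0.2 hmS q2 (by omega)
      · intro e he
        by_cases hee : e = e0
        · subst hee; left; rw [← he0m]
        · obtain ⟨d1, d2, d3, d4⟩ := hdisj e he e0 he0 hee
          obtain ⟨r1, r2, r3⟩ := hord e he
          rw [he0m] at d1
          have h1 : m < e.1 := lt_of_le_of_ne (hmle e.1 r1) (Ne.symm d1)
          rcases lt_trichotomy e.1 e0.2 with hlt | heq | hgt
          · right; left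
            refine ⟨h1, ?_⟩
            by_contra hcon
            push_neg at hcon
            have h2 : e0.2 < e.2 := lt_of_le_of_ne hcon (Ne.symm d4)
            exact hnc e0 he0 e he ⟨by omega, hlt, h2⟩
          · exact absurd heq d2
          · right; right; exact hgt
      · have h := hev e0 he0
        rw [he0m] at h
        exact h
    · push_neg at hm
      have hS1 : 0 < S.card := Finset.card_pos.mpr hne
      have hS2 : 2 ≤ S.card := by
        rcases hevS with ⟨k, hk⟩; omega
      have hne2 : (S.erase m).Nonempty := by
        rw [← Finset.card_pos, Finset.card_erase_of_mem hmS]; omega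
      set t := (S.erase m).min' hne2 with htdef
      have htmem : t ∈ S.erase m := Finset.min'_mem _ _
      have htS : t ∈ S := Finset.mem_of_mem_erase htmem
      have htm : t ≠ m := Finset.ne_of_mem_erase htmem
      have hmt : m < t := lt_of_le_of_ne (hmle t htS) (Ne.symm htm)
      have htle : ∀ x ∈ S, x ≠ m → t ≤ x := fun x hx hxm =>
        Finset.min'_le _ x (Finset.mem_erase.mpr ⟨hxm, hx⟩)
      by_cases ht : ∃ e ∈ M, e.1 = t
      · obtain ⟨e0, he0, he0t⟩ := ht
        obtain ⟨q1, q2, q3⟩ := hord e0 he0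
        apply main t e0.2 htS q2 (by omega)
        · intro e he
          by_cases hee : e = e0
          · subst hee; left; rw [← he0t]
          · obtain ⟨d1, d2, d3, d4⟩ := hdisj e he e0 he0 hee
            obtain ⟨r1, r2, r3⟩ := hord e he
            rw [he0t] at d1
            have h0 : e.1 ≠ m := hm e he
            have h1 : t < e.1 := lt_of_le_of_ne (htle e.1 r1 h0) (Ne.symm d1)
            rcases lt_trichotomy e.1 e0.2 with hlt | heq | hgt
            · right; left
              refine ⟨h1, ?_⟩
              by_contra hcon
              push_neg at hcon
              have h2 : e0.2 < e.2 := lt_of_le_of_ne hcon (Ne.symm d4)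
              exact hnc e0 he0 e he ⟨by omega, hlt, h2⟩
            · exact absurd heq d2
            · right; right; exact hgt
        · have h := hev e0 he0
          rw [he0t] at h
          exact h
      · push_neg at ht
        apply main m t hmS htS hmt
        · intro e he
          right; right
          obtain ⟨r1, r2, r3⟩ := hord e he
          have h0 : e.1 ≠ m := hm e he
          have h1 : e.1 ≠ t := ht e he
          have := htle e.1 r1 h0
          omega
        · have hempty : S.filter (fun x => m < x ∧ x < t) = ∅ := by
            ext x
            simp only [Finset.mem_filter, Finset.notMem_empty, iff_false, not_and]
            intro hx h1 h2
            have := htle x hx (by omega)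
            omega
          rw [hempty]
          simp

/-- Any partial non-crossing matching `M` on `{0, …, 2n-1}` (pairs written as ordered pairs
`(a, b)` with `a < b`) whose pairs are pairwise disjoint, only match indices of opposite
parity, and do not cross, extends to a perfect non-crossing matching: a fixed-point-free
involution `σ` with no indices `i < j < σ i < σ j` such that `σ a = b` for every pair. -/
theorem partial_noncrossing_matching_extends (n : ℕ) (hn : 1 ≤ n)
    (M : Set (Fin (2 * n) × Fin (2 * n)))
    (hord : ∀ e ∈ M, e.1 < e.2)
    (hodd : ∀ e ∈ M, Odd (e.2.val - e.1.val))
    (hdisj : ∀ e ∈ M, ∀ f ∈ M, e ≠ f →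
      e.1 ≠ f.1 ∧ e.1 ≠ f.2 ∧ e.2 ≠ f.1 ∧ e.2 ≠ f.2)
    (hnc : ¬ ∃ e ∈ M, ∃ f ∈ M, e.1 < f.1 ∧ f.1 < e.2 ∧ e.2 < f.2) :
    ∃ σ : Equiv.Perm (Fin (2 * n)), Function.Involutive σ ∧ (∀ i, σ i ≠ i) ∧
      (¬ ∃ i j : Fin (2 * n), i < j ∧ j < σ i ∧ σ i < σ j) ∧
      ∀ e ∈ M, σ e.1 = e.2 := by
  classical
  set S : Finset ℕ := Finset.range (2 * n) with hSdef
  set M' : Set (ℕ × ℕ) := {p | ∃ e ∈ M, p = (e.1.val, e.2.val)} with hM'def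
  obtain ⟨g, hgmem, hgout, hgext, hgnc⟩ := key (2 * n) S (by simp [hSdef]) M'
    (by
      rintro p ⟨e, he, rfl⟩
      exact ⟨Finset.mem_range.mpr e.1.isLt, Finset.mem_range.mpr e.2.isLt, hord e he⟩)
    (by
      rintro p ⟨e, he, rfl⟩ q ⟨f, hf, rfl⟩ hpq
      have hef : e ≠ f := by rintro rfl; exact hpq rfl
      obtain ⟨d1, d2, d3, d4⟩ := hdisj e he f hf hef
      exact ⟨fun h => d1 (Fin.ext h), fun h => d2 (Fin.ext h),
        fun h => d3 (Fin.ext h), fun h => d4 (Fin.ext h)⟩)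
    (by
      rintro p ⟨e, he, rfl⟩ q ⟨f, hf, rfl⟩ ⟨c1, c2, c3⟩
      exact hnc ⟨e, he, f, hf, c1, c2, c3⟩)
    (by
      rintro p ⟨e, he, rfl⟩
      have hlt : e.1.val < e.2.val := hord e he
      have h2 : e.2.val < 2 * n := e.2.isLt
      have heq : S.filter (fun x => e.1.val < x ∧ x < e.2.val)
          = Finset.Ico (e.1.val + 1) e.2.val := by
        ext x
        simp only [hSdef, Finset.mem_filter, Finset.mem_range, Finset.mem_Ico]
        omega
      rw [heq, Nat.card_Ico]
      obtain ⟨k, hk⟩ := hodd e he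
      rw [Nat.even_iff]
      omega)
    (by
      rw [hSdef, Finset.card_range]
      exact even_two_mul n)
  have hmr : ∀ i : Fin (2 * n), (i : ℕ) ∈ S := fun i => Finset.mem_range.mpr i.isLt
  set σf : Fin (2 * n) → Fin (2 * n) :=
    fun i => ⟨g i.val, Finset.mem_range.mp (hgmem i.val (hmr i)).1⟩ with hσfdef
  have hinv : Function.Involutive σf := by
    intro i
    apply Fin.ext
    exact (hgmem i.val (hmr i)).2.1
  refine ⟨hinv.toPerm, hinv, ?_, ?_, ?_⟩
  · intro i h
    exact (hgmem i.val (hmr i)).2.2 (congrArg Fin.val h)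
  · rintro ⟨i, j, h1, h2, h3⟩
    exact hgnc i.val (hmr i) j.val (hmr j) h1 h2 h3
  · intro e he
    apply Fin.ext
    exact hgext (e.1.val, e.2.val) ⟨e, he, rfl⟩
end

section
/- For every natural number n, the number of 231-avoiding permutations of {1,…,n} equals the n-th Catalan number: the cardinality of the set of permutations σ of an n-element linearly ordered set such that there exist no indices i < j < k with σ(k) < σ(i) < σ(j) is C_n. -/
/-!
If `a :: l` lists a finite subset `s` of a linear order without a 231 pattern, then no entry
above `a` can precede an entry below `a` in `l`, so `l = L ++ R` where `L` and `R` are 231-avoiding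
arrangements of the elements of `s` below and above `a`; conversely every such `a :: (L ++ R)`
avoids 231. Summing over the first entry `a`, whose rank in `s` runs through `0, …, #s - 1`,
gives the Catalan recurrence. Arrangements of arbitrary finite sets are used so that the two
blocks need no renormalisation; permutations of `Fin n` are the arrangements of `univ` via
`List.ofFn`.
-/

open Finset
open scoped List

theorem List.mem_or_mem_of_pair_sublist_append {α : Type*} {x y : α} {L R : List α}
    (h : [x, y] <+ L ++ R) : x ∈ L ∨ y ∈ R := by
  obtain ⟨r₁, r₂, hr, h₁, h₂⟩ := List.sublist_append_iff.mp h
  rcases r₁ with _ | ⟨z, r₁⟩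
  · rw [List.nil_append] at hr
    exact .inr (h₂.subset (by simp [← hr]))
  · exact .inl (h₁.subset (by simp_all))

section Patterns
variable {α : Type*} [LinearOrder α]

def Contains231 (l : List α) : Prop := ∃ a b c, [b, c, a] <+ l ∧ a < b ∧ b < c

theorem Contains231.mono {l₁ l₂ : List α} (h : Contains231 l₁) (hl : l₁ <+ l₂) :
    Contains231 l₂ :=
  let ⟨a, b, c, hs, hab, hbc⟩ := h
  ⟨a, b, c, hs.trans hl, hab, hbc⟩

theorem contains231_append_iff {L R : List α} (h : ∀ x ∈ L, ∀ y ∈ R, x < y) :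
    Contains231 (L ++ R) ↔ Contains231 L ∨ Contains231 R := by
  refine ⟨fun ⟨a, b, c, hs, hab, hbc⟩ => ?_, ?_⟩
  · obtain ⟨r₁, r₂, hr, h₁, h₂⟩ := List.sublist_append_iff.mp hs
    have cross (hb : b ∈ L) (ha : a ∈ R) : False := (h b hb a ha).not_gt hab
    rcases r₁ with _ | ⟨x, _ | ⟨y, _ | ⟨z, r₁⟩⟩⟩
    · exact .inr ⟨a, b, c, hr ▸ h₂, hab, hbc⟩
    · obtain ⟨rfl, rfl⟩ := List.cons_eq_cons.mp hr
      exact (cross (h₁.subset (by simp)) (h₂.subset (by simp))).elim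
    · obtain ⟨rfl, rfl, rfl⟩ : b = x ∧ c = y ∧ [a] = r₂ := by simpa using hr
      exact (cross (h₁.subset (by simp)) (h₂.subset (by simp))).elim
    · obtain ⟨rfl, rfl, rfl, rfl, rfl⟩ : b = x ∧ c = y ∧ a = z ∧ r₁ = [] ∧ r₂ = [] := by
        simpa using hr
      exact .inl ⟨a, b, c, h₁, hab, hbc⟩
  · rintro (hL | hR)
    · exact hL.mono (List.sublist_append_left L R)
    · exact hR.mono (List.sublist_append_right L R)

theorem contains231_cons_iff {a : α} {l : List α} :
    Contains231 (a :: l) ↔ Contains231 l ∨ ∃ c b, [c, b] <+ l ∧ b < a ∧ a < c := by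
  constructor
  · rintro ⟨x, y, z, hs, hxy, hyz⟩
    rcases List.sublist_cons_iff.mp hs with hs | ⟨r, hr, hs⟩
    · exact .inl ⟨x, y, z, hs, hxy, hyz⟩
    · obtain ⟨rfl, rfl⟩ := List.cons_eq_cons.mp hr
      exact .inr ⟨z, x, hs, hxy, hyz⟩
  · rintro (h | ⟨c, b, hs, hba, hac⟩)
    · exact h.mono (List.sublist_cons_self a l)
    · exact ⟨b, a, c, hs.cons_cons a, hba, hac⟩

theorem contains231_cons_append_iff {a : α} {L R : List α} (hL : ∀ x ∈ L, x < a)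
    (hR : ∀ y ∈ R, a < y) : Contains231 (a :: (L ++ R)) ↔ Contains231 L ∨ Contains231 R := by
  rw [contains231_cons_iff, contains231_append_iff fun x hx y hy => (hL x hx).trans (hR y hy),
    or_iff_left]
  rintro ⟨c, b, hs, hba, hac⟩
  rcases List.mem_or_mem_of_pair_sublist_append hs with hc | hb
  · exact (hL c hc).not_gt hac
  · exact (hR b hb).not_gt hba

theorem eq_filter_lt_append_filter_gt_of_not_contains231_cons {a : α} {l : List α}
    (h : ¬ Contains231 (a :: l)) (ha : a ∉ l) :
    l = l.filter (· < a) ++ l.filter (a < ·) := by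
  induction l with
  | nil => rfl
  | cons y l ih =>
    rw [List.mem_cons, not_or] at ha
    rcases Ne.lt_or_gt (Ne.symm ha.1) with hya | hay
    · have h' : ¬ Contains231 (a :: l) :=
        fun hc => h (hc.mono ((List.sublist_cons_self y l).cons_cons a))
      simp [hya, hya.not_gt, ← ih h' ha.2]
    · have hl : ∀ z ∈ l, a < z := fun z hz =>
        (ne_of_mem_of_not_mem hz ha.2).symm.lt_of_le <|
          le_of_not_gt fun hza => h ⟨z, a, y, by simpa using hz, hza, hay⟩
      have hlow : l.filter (· < a) = [] := by simpa using fun z hz => (hl z hz).le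
      have hhigh : l.filter (a < ·) = l := by simpa [List.filter_eq_self] using hl
      simp [hay, hay.not_gt, hlow, hhigh]

theorem filter_append_of_forall_lt {a : α} {L R : List α} (hL : ∀ x ∈ L, x < a)
    (hR : ∀ y ∈ R, a < y) : (L ++ R).filter (· < a) = L ∧ (L ++ R).filter (a < ·) = R := by
  constructor
  · rw [List.filter_append, List.filter_eq_self.mpr (by simpa using hL),
      List.filter_eq_nil_iff.mpr (by simpa using fun y hy => (hR y hy).le), List.append_nil]
  · rw [List.filter_append,
      (List.filter_eq_nil_iff (l := L)).mpr (by simpa using fun x hx => (hL x hx).le),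
      List.filter_eq_self.mpr (by simpa using hR), List.nil_append]

end Patterns

section Counting
variable {α : Type*} [LinearOrder α]

theorem not_contains231_nil : ¬ Contains231 ([] : List α) := by
  rintro ⟨a, b, c, hs, -⟩
  simp at hs

open scoped Classical in
noncomputable def avoiders231 (s : Finset α) : Finset (List α) :=
  (Multiset.lists s.val).toFinset.filter fun l => ¬ Contains231 l

theorem mem_avoiders231 {s : Finset α} {l : List α} :
    l ∈ avoiders231 s ↔ l.Nodup ∧ l.toFinset = s ∧ ¬ Contains231 l := by
  have key : s.val = l ↔ l.Nodup ∧ l.toFinset = s := by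
    constructor
    · intro h
      have hl : l.Nodup := Multiset.coe_nodup.mp (h ▸ s.nodup)
      exact ⟨hl, Finset.val_inj.mp (by rw [List.toFinset_val, hl.dedup, h])⟩
    · rintro ⟨hl, rfl⟩
      rw [List.toFinset_val, hl.dedup]
  simp [avoiders231, Multiset.mem_lists_iff, key, and_assoc]

theorem avoiders231_empty : avoiders231 (∅ : Finset α) = {[]} := by
  ext l
  simp only [mem_avoiders231, List.toFinset_eq_empty_iff, mem_singleton]
  exact ⟨fun h => h.2.1, by rintro rfl; exact ⟨List.nodup_nil, rfl, not_contains231_nil⟩⟩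

theorem mem_of_mem_avoiders231 {s : Finset α} {l : List α} {x : α} (hl : l ∈ avoiders231 s)
    (hx : x ∈ l) : x ∈ s := by
  rw [← (mem_avoiders231.mp hl).2.1]
  exact List.mem_toFinset.mpr hx

theorem forall_of_mem_avoiders231_filter {s : Finset α} {p : α → Prop} [DecidablePred p]
    {l : List α} (hl : l ∈ avoiders231 (s.filter p)) : ∀ x ∈ l, p x :=
  fun _ hx => (mem_filter.mp (mem_of_mem_avoiders231 hl hx)).2

theorem cons_append_mem_avoiders231 {s : Finset α} {a : α} {L R : List α} (ha : a ∈ s)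
    (hL : L ∈ avoiders231 (s.filter (· < a))) (hR : R ∈ avoiders231 (s.filter (a < ·))) :
    a :: (L ++ R) ∈ avoiders231 s := by
  have hLa := forall_of_mem_avoiders231_filter hL
  have hRa := forall_of_mem_avoiders231_filter hR
  obtain ⟨hLn, hLs, hLav⟩ := mem_avoiders231.mp hL
  obtain ⟨hRn, hRs, hRav⟩ := mem_avoiders231.mp hR
  refine mem_avoiders231.mpr ⟨?_, ?_, ?_⟩
  · refine List.nodup_cons.mpr ⟨fun h => ?_, List.nodup_append.mpr ⟨hLn, hRn, ?_⟩⟩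
    · rcases List.mem_append.mp h with h | h
      exacts [(hLa a h).false, (hRa a h).false]
    · exact fun x hx y hy => ((hLa x hx).trans (hRa y hy)).ne
  · ext y
    simp only [List.toFinset_cons, List.toFinset_append, hLs, hRs, mem_insert, mem_union,
      mem_filter, ← and_or_left]
    rcases lt_trichotomy y a with hya | rfl | hay
    · simp [hya, hya.ne]
    · simp [ha]
    · simp [hay, hay.ne']
  · rw [contains231_cons_append_iff hLa hRa]
    exact not_or.mpr ⟨hLav, hRav⟩

theorem exists_eq_cons_append_of_mem_avoiders231 {s : Finset α} {l : List α}
    (hl : l ∈ avoiders231 s) (hs : s.Nonempty) :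
    ∃ a ∈ s, ∃ L ∈ avoiders231 (s.filter (· < a)), ∃ R ∈ avoiders231 (s.filter (a < ·)),
      l = a :: (L ++ R) := by
  obtain ⟨hnd, rfl, hav⟩ := mem_avoiders231.mp hl
  obtain ⟨a, r, rfl⟩ := List.exists_cons_of_ne_nil (by simpa using hs.ne_empty)
  obtain ⟨ha, hr⟩ := List.nodup_cons.mp hnd
  have hsplit := eq_filter_lt_append_filter_gt_of_not_contains231_cons hav ha
  have hpart {p : α → Prop} [DecidablePred p] (hp : ∀ x, p x → x ≠ a) :
      r.filter p ∈ avoiders231 ((a :: r).toFinset.filter p) := by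
    refine mem_avoiders231.mpr ⟨hr.filter _, ?_, fun h => hav (h.mono ?_)⟩
    · ext x
      simp only [List.toFinset_filter, List.mem_toFinset, decide_eq_true_eq, mem_filter,
        List.mem_cons]
      exact ⟨fun h => ⟨.inr h.1, h.2⟩, fun h => ⟨h.1.resolve_left (hp x h.2), h.2⟩⟩
    · exact (List.filter_sublist).trans (List.sublist_cons_self a r)
  exact ⟨a, by simp, _, hpart fun _ hx => hx.ne, _, hpart fun _ hx => hx.ne', by rw [← hsplit]⟩

theorem card_avoiders231_of_nonempty {s : Finset α} (hs : s.Nonempty) :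
    #(avoiders231 s) =
      ∑ a ∈ s, #(avoiders231 (s.filter (· < a))) * #(avoiders231 (s.filter (a < ·))) := by
  have hdecomp : avoiders231 s = s.biUnion fun a =>
      (avoiders231 (s.filter (· < a)) ×ˢ avoiders231 (s.filter (a < ·))).image
        fun p => a :: (p.1 ++ p.2) := by
    ext l
    simp only [mem_biUnion, mem_image, mem_product, Prod.exists]
    constructor
    · intro hl
      obtain ⟨a, ha, L, hL, R, hR, rfl⟩ := exists_eq_cons_append_of_mem_avoiders231 hl hs
      exact ⟨a, ha, L, R, ⟨hL, hR⟩, rfl⟩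
    · rintro ⟨a, ha, L, R, ⟨hL, hR⟩, rfl⟩
      exact cons_append_mem_avoiders231 ha hL hR
  rw [hdecomp, card_biUnion]
  · refine sum_congr rfl fun a _ => ?_
    rw [card_image_of_injOn, card_product]
    rintro ⟨L, R⟩ hLR ⟨L', R'⟩ hLR' heq
    simp only [coe_product, Set.mem_prod, mem_coe] at hLR hLR'
    have hsplit := filter_append_of_forall_lt (forall_of_mem_avoiders231_filter hLR.1)
      (forall_of_mem_avoiders231_filter hLR.2)
    have hsplit' := filter_append_of_forall_lt (forall_of_mem_avoiders231_filter hLR'.1)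
      (forall_of_mem_avoiders231_filter hLR'.2)
    rw [(List.cons.inj heq).2] at hsplit
    exact Prod.ext (hsplit.1.symm.trans hsplit'.1) (hsplit.2.symm.trans hsplit'.2)
  · intro a _ b _ hab
    simp only [Function.onFun, disjoint_left, mem_image]
    rintro _ ⟨_, _, rfl⟩ ⟨_, _, h⟩
    exact hab (List.cons.inj h).1.symm

theorem Finset.sum_card_filter_lt_card_filter_gt {M : Type*} [AddCommMonoid M] (s : Finset α)
    (g : ℕ → ℕ → M) :
    ∑ a ∈ s, g #(s.filter (· < a)) #(s.filter (a < ·)) =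
      ∑ i ∈ range #s, g i (#s - 1 - i) := by
  induction s using Finset.induction_on_max generalizing g with
  | empty => simp
  | insert x s hx ih =>
    have hxs : x ∉ s := fun h => (hx x h).false
    have hlow : ∀ a ∈ s, (insert x s).filter (· < a) = s.filter (· < a) := fun a ha => by
      rw [filter_insert, if_neg (hx a ha).not_gt]
    have hhigh : ∀ a ∈ s, #((insert x s).filter (a < ·)) = #(s.filter (a < ·)) + 1 :=
      fun a ha => by
        rw [filter_insert, if_pos (hx a ha), card_insert_of_notMem (by simp [hxs])]
    have htop : (insert x s).filter (· < x) = s := by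
      rw [filter_insert, if_neg (lt_irrefl x), filter_true_of_mem hx]
    have hempty : (insert x s).filter (x < ·) = ∅ := by
      rw [filter_insert, if_neg (lt_irrefl x),
        filter_false_of_mem fun a ha => (hx a ha).not_gt]
    rw [sum_insert hxs, htop, hempty, card_insert_of_notMem hxs, sum_range_succ,
      sum_congr rfl fun a ha => by rw [hlow a ha, hhigh a ha], ih fun i j => g i (j + 1)]
    rw [card_empty, add_comm]
    congr 1
    · exact sum_congr rfl fun i hi => by rw [mem_range] at hi; congr 1; omega
    · simp

theorem card_avoiders231 (s : Finset α) : #(avoiders231 s) = catalan #s := by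
  induction s using Finset.strongInduction with
  | H s ih =>
    rcases s.eq_empty_or_nonempty with rfl | hs
    · simp [avoiders231_empty]
    obtain ⟨n, hn⟩ := Nat.exists_eq_add_one_of_ne_zero hs.card_pos.ne'
    have hsub (a) (ha : a ∈ s) (p : α → Prop) [DecidablePred p] (hpa : ¬ p a) :
        s.filter p ⊂ s :=
      filter_ssubset.mpr ⟨a, ha, hpa⟩
    rw [card_avoiders231_of_nonempty hs, sum_congr rfl fun a ha => by
      rw [ih _ (hsub a ha (· < a) (lt_irrefl a)), ih _ (hsub a ha (a < ·) (lt_irrefl a))]]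
    rw [sum_card_filter_lt_card_filter_gt s fun i j => catalan i * catalan j, hn, catalan_succ,
      Fin.sum_univ_eq_sum_range (fun i => catalan i * catalan (n - i))]
    simp

end Counting

section Permutations
variable {α : Type*} [LinearOrder α]

theorem contains231_ofFn_iff {n : ℕ} (f : Fin n → α) :
    Contains231 (List.ofFn f) ↔ ∃ i j k, i < j ∧ j < k ∧ f k < f i ∧ f i < f j := by
  rw [List.ofFn_eq_map]
  constructor
  · rintro ⟨a, b, c, hs, hab, hbc⟩
    obtain ⟨l, hl, hmap⟩ := List.sublist_map_iff.mp hs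
    have hlt := (List.pairwise_lt_finRange n).sublist hl
    rcases l with _ | ⟨i, _ | ⟨j, _ | ⟨k, _ | _⟩⟩⟩ <;>
      simp only [List.map_cons, List.map_nil, List.cons.injEq, reduceCtorEq, and_false,
        and_true] at hmap
    obtain ⟨rfl, rfl, rfl⟩ := hmap
    exact ⟨i, j, k, List.rel_of_pairwise_cons hlt (by simp),
      List.rel_of_pairwise_cons hlt.of_cons (by simp), hab, hbc⟩
  · rintro ⟨i, j, k, hij, hjk, hki, hij'⟩
    refine ⟨f k, f i, f j, ?_, hki, hij'⟩
    have : [i, j, k] <+ List.finRange n := by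
      refine List.sublist_of_subperm_of_pairwise (r := (· < ·)) ?_ ?_
        (List.pairwise_lt_finRange n)
      · exact List.Nodup.subperm (by simp [hij.ne, hjk.ne, (hij.trans hjk).ne]) (by simp)
      · simp [hij, hjk, hij.trans hjk]
    simpa using this.map f

theorem ofFn_mem_avoiders231_univ_iff {n : ℕ} (σ : Equiv.Perm (Fin n)) :
    List.ofFn σ ∈ avoiders231 univ ↔ ¬ ∃ i j k, i < j ∧ j < k ∧ σ k < σ i ∧ σ i < σ j := by
  rw [mem_avoiders231, contains231_ofFn_iff, and_iff_right (List.nodup_ofFn.mpr σ.injective),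
    and_iff_right (eq_univ_of_forall fun x => by simpa using ⟨σ.symm x, σ.apply_symm_apply x⟩)]

theorem List.Nodup.exists_perm_ofFn_eq {n : ℕ} {l : List (Fin n)} (hl : l.Nodup)
    (huniv : l.toFinset = univ) : ∃ σ : Equiv.Perm (Fin n), List.ofFn σ = l := by
  have hlen : l.length = n := by
    simpa [List.toFinset_card_of_nodup hl] using congrArg card huniv
  have hinj : Function.Injective fun i : Fin n => l.get (i.cast hlen.symm) :=
    (List.nodup_iff_injective_get.mp hl).comp (Fin.cast_injective _)
  exact ⟨.ofBijective _ (Finite.injective_iff_bijective.mp hinj),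
    (List.ofFn_congr hlen l.get).symm.trans (List.ofFn_get l)⟩

end Permutations

/-- The number of 231-avoiding permutations of an `n`-element linearly ordered set equals
the `n`-th Catalan number. -/
theorem card_avoiding231_eq_catalan (n : ℕ) :
    Nat.card {σ : Equiv.Perm (Fin n) //
      ¬ ∃ i j k : Fin n, i < j ∧ j < k ∧ σ k < σ i ∧ σ i < σ j} = catalan n := by
  calc Nat.card _ = Nat.card (avoiders231 (univ : Finset (Fin n))) := by
        refine Nat.card_eq_of_bijective
          (fun σ => ⟨List.ofFn σ.1, (ofFn_mem_avoiders231_univ_iff σ.1).mpr σ.2⟩) ⟨?_, ?_⟩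
        · exact fun σ τ h => Subtype.ext <| Equiv.ext <| congrFun <|
            List.ofFn_injective (congrArg Subtype.val h)
        · rintro ⟨l, hl⟩
          obtain ⟨hnd, huniv, -⟩ := mem_avoiders231.mp hl
          obtain ⟨σ, rfl⟩ := hnd.exists_perm_ofFn_eq huniv
          exact ⟨⟨σ, (ofFn_mem_avoiders231_univ_iff σ).mp hl⟩, rfl⟩
    _ = catalan n := by
        rw [Nat.card_eq_finsetCard, card_avoiders231, card_univ, Fintype.card_fin]
end

section
/- Let a, b, c, d be four points of the Euclidean plane ℝ² such that no three of them are collinear and the four points are in strictly convex position, i.e. none of the four points lies in the convex hull of the other three. If the closed segments [a,b] and [c,d] are disjoint, then c and d lie strictly on the same side of the line through a and b; that is, c and d are strictly on one side of the affine span of {a, b}. (For points in convex position, every segment of a non-crossing matching has each other matched segment entirely within one of its two half-planes.) -/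
open AffineSubspace

/-- In the plane, two points off a line are strictly on the same side or strictly
on opposite sides of it. -/
lemma ssameSide_or_sOppSide_aux (a b c d : EuclideanSpace ℝ (Fin 2))
    (habc : ¬ Collinear ℝ ({a, b, c} : Set (EuclideanSpace ℝ (Fin 2))))
    (hcs : c ∉ affineSpan ℝ ({a, b} : Set (EuclideanSpace ℝ (Fin 2))))
    (hds : d ∉ affineSpan ℝ ({a, b} : Set (EuclideanSpace ℝ (Fin 2)))) :
    (affineSpan ℝ ({a, b} : Set (EuclideanSpace ℝ (Fin 2)))).SSameSide c d ∨
    (affineSpan ℝ ({a, b} : Set (EuclideanSpace ℝ (Fin 2)))).SOppSide c d := by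
  set s := affineSpan ℝ ({a, b} : Set (EuclideanSpace ℝ (Fin 2))) with hs
  have haS : a ∈ s := mem_affineSpan ℝ (by simp)
  -- the span of {a, b, c} is everything
  have htop : affineSpan ℝ ({a, b, c} : Set (EuclideanSpace ℝ (Fin 2))) = ⊤ := by
    have hai : AffineIndependent ℝ ![a, b, c] :=
      affineIndependent_iff_not_collinear_set.2 habc
    have hr : Set.range ![a, b, c] = ({a, b, c} : Set (EuclideanSpace ℝ (Fin 2))) := by
      ext x
      simp [Matrix.range_cons, Matrix.range_empty]
      tauto
    rw [← hr]
    rw [hai.affineSpan_eq_top_iff_card_eq_finrank_add_one]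
    simp [finrank_euclideanSpace_fin]
  have hmem : d ∈ affineSpan ℝ (insert c (s : Set (EuclideanSpace ℝ (Fin 2)))) := by
    rw [hs, affineSpan_insert_affineSpan]
    have : (insert c {a, b} : Set (EuclideanSpace ℝ (Fin 2))) = {a, b, c} := by
      ext x; simp; tauto
    rw [this, htop]
    trivial
  rw [mem_affineSpan_insert_iff haS] at hmem
  obtain ⟨r, p₀, hp₀, hd'⟩ := hmem
  have hdp : d -ᵥ p₀ = r • (c -ᵥ a) := by
    rw [hd']; simp
  have hr0 : r ≠ 0 := by
    rintro rfl
    rw [zero_smul, vsub_eq_zero_iff_eq] at hdp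
    exact hds (hdp ▸ hp₀)
  rcases lt_or_gt_of_ne hr0 with hneg | hpos
  · right
    rw [sOppSide_iff_exists_left haS]
    refine ⟨hcs, hds, p₀, hp₀, ?_⟩
    have : p₀ -ᵥ d = (-r) • (c -ᵥ a) := by
      rw [← neg_vsub_eq_vsub_rev, hdp, neg_smul]
    rw [this]
    exact SameRay.sameRay_nonneg_smul_right _ (by linarith)
  · left
    rw [sSameSide_iff_exists_left haS]
    refine ⟨hcs, hds, p₀, hp₀, ?_⟩
    rw [hdp]
    exact SameRay.sameRay_nonneg_smul_right _ hpos.le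

/-- For four points in the plane, no three collinear and in strictly convex position (none
lies in the convex hull of the other three): if the closed segments `[a,b]` and `[c,d]` are
disjoint, then `c` and `d` lie strictly on the same side of the line through `a` and `b`. -/
theorem disjoint_segment_ssameSide (a b c d : EuclideanSpace ℝ (Fin 2))
    (habc : ¬ Collinear ℝ ({a, b, c} : Set (EuclideanSpace ℝ (Fin 2))))
    (habd : ¬ Collinear ℝ ({a, b, d} : Set (EuclideanSpace ℝ (Fin 2))))
    (hacd : ¬ Collinear ℝ ({a, c, d} : Set (EuclideanSpace ℝ (Fin 2))))
    (hbcd : ¬ Collinear ℝ ({b, c, d} : Set (EuclideanSpace ℝ (Fin 2))))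
    (ha : a ∉ convexHull ℝ ({b, c, d} : Set (EuclideanSpace ℝ (Fin 2))))
    (hb : b ∉ convexHull ℝ ({a, c, d} : Set (EuclideanSpace ℝ (Fin 2))))
    (hc : c ∉ convexHull ℝ ({a, b, d} : Set (EuclideanSpace ℝ (Fin 2))))
    (hd : d ∉ convexHull ℝ ({a, b, c} : Set (EuclideanSpace ℝ (Fin 2))))
    (hdisj : Disjoint (segment ℝ a b) (segment ℝ c d)) :
    (affineSpan ℝ ({a, b} : Set (EuclideanSpace ℝ (Fin 2)))).SSameSide c d := by
  set s := affineSpan ℝ ({a, b} : Set (EuclideanSpace ℝ (Fin 2))) with hs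
  have hcs : c ∉ s := by
    intro h
    apply habc
    have := collinear_insert_of_mem_affineSpan_pair h
    have he : ({c, a, b} : Set (EuclideanSpace ℝ (Fin 2))) = {a, b, c} := by
      ext x; simp; tauto
    rwa [he] at this
  have hds : d ∉ s := by
    intro h
    apply habd
    have := collinear_insert_of_mem_affineSpan_pair h
    have he : ({d, a, b} : Set (EuclideanSpace ℝ (Fin 2))) = {a, b, d} := by
      ext x; simp; tauto
    rwa [he] at this
  rcases ssameSide_or_sOppSide_aux a b c d habc hcs hds with hsame | hopp
  · exact hsame
  exfalso
  obtain ⟨p, hp, hsbtw⟩ := hopp.exists_sbtw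
  have hpcd : p ∈ segment ℝ c d := hsbtw.wbtw.mem_segment
  -- p is collinear with a and b
  have hcol : Collinear ℝ ({a, p, b} : Set (EuclideanSpace ℝ (Fin 2))) := by
    have := collinear_insert_of_mem_affineSpan_pair hp
    have he : ({p, a, b} : Set (EuclideanSpace ℝ (Fin 2))) = {a, p, b} := by
      ext x; simp; tauto
    rwa [he] at this
  have hphull : ∀ x ∈ ({c, d} : Set (EuclideanSpace ℝ (Fin 2))), True := fun _ _ => trivial
  rcases hcol.wbtw_or_wbtw_or_wbtw with h1 | h2 | h3
  · -- p between a and b: contradicts disjointness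
    exact Set.disjoint_left.mp hdisj h1.mem_segment hpcd
  · -- b between p and a: b ∈ convexHull {a, c, d}
    apply hb
    have hph : p ∈ convexHull ℝ ({a, c, d} : Set (EuclideanSpace ℝ (Fin 2))) := by
      apply segment_subset_convexHull (by simp) (by simp) hpcd
    have hah : a ∈ convexHull ℝ ({a, c, d} : Set (EuclideanSpace ℝ (Fin 2))) :=
      subset_convexHull ℝ _ (by simp)
    exact (convex_convexHull ℝ _).segment_subset hph hah h2.mem_segment
  · -- a between b and p: a ∈ convexHull {b, c, d}
    apply ha
    have hph : p ∈ convexHull ℝ ({b, c, d} : Set (EuclideanSpace ℝ (Fin 2))) := by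
      apply segment_subset_convexHull (by simp) (by simp) hpcd
    have hbh : b ∈ convexHull ℝ ({b, c, d} : Set (EuclideanSpace ℝ (Fin 2))) :=
      subset_convexHull ℝ _ (by simp)
    exact (convex_convexHull ℝ _).segment_subset hbh hph h3.mem_segment
end

section
/- Let n ≥ 1, let θ : {0,…,2n−1} → [0, 2π) be strictly increasing, and let p(i) = (cos θ(i), sin θ(i)) ∈ ℝ² be the corresponding points on the unit circle. Let σ be a fixed-point-free involution of {0,…,2n−1} such that the perfect matching pairing p(i) with p(σ(i)) is non-crossing: for every i and every j ∉ {i, σ(i)}, the closed segments [p(i), p(σ(i))] and [p(j), p(σ(j))] are disjoint. Then every matched pair has opposite parities: for all i, the number i + σ(i) is odd. -/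
/-!
For `i < σ i`, the indices strictly between `i` and `σ i` label the points of one of the two
arcs cut off by the chord `[p i, p (σ i)]`. A chord joining the two arcs would cross it: the sign
of `cross (p (σ i) - p i) (· - p i)`, a product of three half-angle sines, changes along that
chord, so it meets the line through `p i` and `p (σ i)` inside the disc, i.e. on the chord.
Hence `σ` maps the open interval `(i, σ i)` to itself without fixed points, so that interval
has an even number `σ i - i - 1` of elements.
-/

open Real

theorem Finset.even_card_of_involutive_of_mapsTo {α : Type*} [DecidableEq α] {f : α → α}
    (hf : Function.Involutive f) {s : Finset α} (hs : Set.MapsTo f s s)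
    (hfix : ∀ a ∈ s, f a ≠ a) : Even s.card := by
  let g : Function.End s := hs.restrict
  have hg : g ^ 2 ^ 1 = 1 := by
    funext a
    exact Subtype.ext (hf a)
  have hmod := Equiv.Perm.card_fixedPoints_modEq (p := 2) hg
  have hempty : Fintype.card g.fixedPoints = 0 :=
    Fintype.card_eq_zero_iff.2 ⟨fun ⟨a, ha⟩ => hfix a a.2 (congrArg Subtype.val ha)⟩
  rw [hempty, Fintype.card_coe] at hmod
  exact Nat.even_iff.2 hmod

lemma odd_add_of_mapsTo_Ioo {m : ℕ} {σ : Fin m → Fin m} (hinv : Function.Involutive σ)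
    (hfpf : ∀ i, σ i ≠ i)
    (hnest : ∀ i, i < σ i → Set.MapsTo σ (Set.Ioo i (σ i)) (Set.Ioo i (σ i)))
    (i : Fin m) : Odd (i.val + (σ i).val) := by
  wlog hi : i < σ i generalizing i
  · have := this (σ i) (by rw [hinv]; exact (not_lt.1 hi).lt_of_ne (hfpf i))
    rwa [hinv, add_comm] at this
  have heven := Finset.even_card_of_involutive_of_mapsTo hinv
    (s := Finset.Ioo i (σ i)) (by simpa using hnest i hi) (fun a _ => hfpf a)
  rw [Fin.card_Ioo] at heven
  have : i.val < (σ i).val := hi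
  obtain ⟨k, hk⟩ := heven
  exact ⟨i.val + k, by omega⟩

def cross (x y : EuclideanSpace ℝ (Fin 2)) : ℝ := x 0 * y 1 - x 1 * y 0

lemma continuous_cross_right (x : EuclideanSpace ℝ (Fin 2)) : Continuous (cross x) := by
  unfold cross
  fun_prop

lemma exists_eq_smul_of_cross_eq_zero {v w : EuclideanSpace ℝ (Fin 2)} (hv : v ≠ 0)
    (h : cross v w = 0) : ∃ c : ℝ, w = c • v := by
  have hnorm : v 0 ^ 2 + v 1 ^ 2 ≠ 0 := by
    contrapose! hv
    ext i
    fin_cases i <;> simp only [Fin.zero_eta, Fin.mk_one, Fin.isValue, PiLp.zero_apply] <;>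
      nlinarith [sq_nonneg (v 0), sq_nonneg (v 1)]
  refine ⟨(v 0 * w 0 + v 1 * w 1) / (v 0 ^ 2 + v 1 ^ 2), ?_⟩
  unfold cross at h
  ext i
  fin_cases i <;>
    simp only [Fin.zero_eta, Fin.mk_one, Fin.isValue, PiLp.smul_apply, smul_eq_mul] <;>
    field_simp
  · linear_combination (-v 1) * h
  · linear_combination v 0 * h

lemma mem_segment_of_cross_eq_zero {a b x : EuclideanSpace ℝ (Fin 2)} {r : ℝ}
    (ha : ‖a‖ = r) (hb : ‖b‖ = r) (hx : ‖x‖ ≤ r) (hab : a ≠ b)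
    (h : cross (b - a) (x - a) = 0) : x ∈ segment ℝ a b := by
  obtain ⟨c, hc⟩ := exists_eq_smul_of_cross_eq_zero (sub_ne_zero.2 hab.symm) h
  have hcol : Collinear ℝ ({a, x, b} : Set (EuclideanSpace ℝ (Fin 2))) := by
    rw [collinear_iff_of_mem (Set.mem_insert a _)]
    refine ⟨b - a, ?_⟩
    simp only [Set.mem_insert_iff, Set.mem_singleton_iff, vadd_eq_add, forall_eq_or_imp,
      forall_eq]
    exact ⟨⟨0, by simp⟩, ⟨c, by rw [← hc]; abel⟩, ⟨1, by simp⟩⟩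
  refine mem_segment_iff_wbtw.2 (hcol.wbtw_of_dist_eq_of_dist_le (p := 0) (r := r) ?_ ?_ ?_ hab) <;>
    simpa

lemma not_disjoint_segment_of_cross_neg_of_cross_pos {a b u v : EuclideanSpace ℝ (Fin 2)}
    {r : ℝ} (ha : ‖a‖ = r) (hb : ‖b‖ = r) (hu : ‖u‖ ≤ r) (hv : ‖v‖ ≤ r)
    (hau : cross (b - a) (u - a) < 0) (hav : 0 < cross (b - a) (v - a)) :
    ¬ Disjoint (segment ℝ a b) (segment ℝ u v) := by
  have hab : a ≠ b := by
    rintro rfl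
    simp [cross] at hau
  obtain ⟨x, hxuv, hx⟩ : ∃ x ∈ segment ℝ u v, cross (b - a) (x - a) = 0 :=
    (convex_segment u v).isPreconnected.intermediate_value (left_mem_segment ℝ u v)
      (right_mem_segment ℝ u v)
      ((continuous_cross_right _).comp (continuous_sub_right a)).continuousOn ⟨hau.le, hav.le⟩
  have hxr : ‖x‖ ≤ r := by
    simpa using (convex_closedBall (0 : EuclideanSpace ℝ (Fin 2)) r).segment_subset
      (by simpa using hu) (by simpa using hv) hxuv
  exact Set.not_disjoint_iff.2 ⟨x, mem_segment_of_cross_eq_zero ha hb hxr hab hx, hxuv⟩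

noncomputable def circlePoint (t : ℝ) : EuclideanSpace ℝ (Fin 2) :=
  (WithLp.equiv 2 (Fin 2 → ℝ)).symm ![cos t, sin t]

lemma norm_circlePoint (t : ℝ) : ‖circlePoint t‖ = 1 := by
  simp [circlePoint, EuclideanSpace.norm_eq]

lemma cross_circlePoint_sub (α β γ : ℝ) :
    cross (circlePoint β - circlePoint α) (circlePoint γ - circlePoint α)
      = 4 * sin ((β - α) / 2) * sin ((γ - α) / 2) * sin ((γ - β) / 2) := by
  have h : (γ - β) / 2 = (γ + α) / 2 - (β + α) / 2 := by ring
  simp only [cross, circlePoint, PiLp.sub_apply, WithLp.equiv_symm_apply, Fin.isValue,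
    Matrix.cons_val_zero, Matrix.cons_val_one, Matrix.cons_val_fin_one]
  rw [cos_sub_cos β α, sin_sub_sin γ α, sin_sub_sin β α, cos_sub_cos γ α, h, sin_sub]
  ring

lemma sin_half_sub_pos {x y : ℝ} (hx : x ∈ Set.Ico 0 (2 * π)) (hy : y ∈ Set.Ico 0 (2 * π))
    (hxy : x < y) : 0 < sin ((y - x) / 2) :=
  sin_pos_of_pos_of_lt_pi (by linarith) (by linarith [hx.1, hy.2])

lemma sin_half_sub_neg {x y : ℝ} (hx : x ∈ Set.Ico 0 (2 * π)) (hy : y ∈ Set.Ico 0 (2 * π))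
    (hxy : x < y) : sin ((x - y) / 2) < 0 := by
  rw [← neg_sub, neg_div, sin_neg, neg_neg_iff_pos]
  exact sin_half_sub_pos hx hy hxy

lemma not_disjoint_segment_circlePoint {α β γ δ : ℝ} (hα : α ∈ Set.Ico 0 (2 * π))
    (hβ : β ∈ Set.Ico 0 (2 * π)) (hγ : γ ∈ Set.Ico 0 (2 * π)) (hδ : δ ∈ Set.Ico 0 (2 * π))
    (hαγ : α < γ) (hγβ : γ < β) (hδαβ : δ < α ∨ β < δ) :
    ¬ Disjoint (segment ℝ (circlePoint α) (circlePoint β))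
      (segment ℝ (circlePoint γ) (circlePoint δ)) := by
  have hαβ : 0 < sin ((β - α) / 2) := sin_half_sub_pos hα hβ (hαγ.trans hγβ)
  refine not_disjoint_segment_of_cross_neg_of_cross_pos (norm_circlePoint α)
    (norm_circlePoint β) (norm_circlePoint γ).le (norm_circlePoint δ).le ?_ ?_
  · rw [cross_circlePoint_sub]
    exact mul_neg_of_pos_of_neg (by positivity [sin_half_sub_pos hα hγ hαγ])
      (sin_half_sub_neg hγ hβ hγβ)
  · rw [cross_circlePoint_sub]
    rcases hδαβ with hδα | hβδ
    · exact mul_pos_of_neg_of_neg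
        (mul_neg_of_pos_of_neg (by positivity) (sin_half_sub_neg hδ hα hδα))
        (sin_half_sub_neg hδ hβ (hδα.trans (hαγ.trans hγβ)))
    · exact mul_pos
        (mul_pos (by positivity) (sin_half_sub_pos hα hδ ((hαγ.trans hγβ).trans hβδ)))
        (sin_half_sub_pos hβ hδ hβδ)

theorem circle_noncrossing_matching_opposite_parity_general (n : ℕ)
    (θ : Fin (2 * n) → ℝ) (hθmono : StrictMono θ)
    (hθrange : ∀ i, 0 ≤ θ i ∧ θ i < 2 * Real.pi)
    (p : Fin (2 * n) → EuclideanSpace ℝ (Fin 2))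
    (hp : ∀ i, p i = (WithLp.equiv 2 (Fin 2 → ℝ)).symm ![Real.cos (θ i), Real.sin (θ i)])
    (σ : Equiv.Perm (Fin (2 * n)))
    (hinv : Function.Involutive σ) (hfpf : ∀ i, σ i ≠ i)
    (hnc : ∀ i j : Fin (2 * n), j ≠ i → j ≠ σ i →
      Disjoint (segment ℝ (p i) (p (σ i))) (segment ℝ (p j) (p (σ j)))) :
    ∀ i : Fin (2 * n), Odd (i.val + (σ i).val) := by
  obtain rfl : p = fun i => circlePoint (θ i) := funext hp
  refine odd_add_of_mapsTo_Ioo hinv hfpf fun i _ j hj => ?_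
  by_contra hout
  have hσj : σ j < i ∨ σ i < σ j := by
    have h1 : σ j ≠ i := fun h => hj.2.ne (by rw [← h, hinv])
    have h2 : σ j ≠ σ i := fun h => hj.1.ne' (σ.injective h)
    simp only [Set.mem_Ioo, not_and_or, not_lt] at hout
    omega
  exact not_disjoint_segment_circlePoint (hθrange i) (hθrange (σ i)) (hθrange j) (hθrange (σ j))
    (hθmono hj.1) (hθmono hj.2) (hσj.imp (hθmono ·) (hθmono ·)) (hnc i j hj.1.ne' hj.2.ne)

/-- For `2n` points on the unit circle listed in strictly increasing angular order in
`[0, 2π)`, any perfect non-crossing matching (fixed-point-free involution with pairwise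
disjoint chords) matches points of opposite parities: `i + σ i` is odd for all `i`. -/
theorem circle_noncrossing_matching_opposite_parity (n : ℕ) (hn : 1 ≤ n)
    (θ : Fin (2 * n) → ℝ) (hθmono : StrictMono θ)
    (hθrange : ∀ i, 0 ≤ θ i ∧ θ i < 2 * Real.pi)
    (p : Fin (2 * n) → EuclideanSpace ℝ (Fin 2))
    (hp : ∀ i, p i = (WithLp.equiv 2 (Fin 2 → ℝ)).symm ![Real.cos (θ i), Real.sin (θ i)])
    (σ : Equiv.Perm (Fin (2 * n)))
    (hinv : Function.Involutive σ) (hfpf : ∀ i, σ i ≠ i)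
    (hnc : ∀ i j : Fin (2 * n), j ≠ i → j ≠ σ i →
      Disjoint (segment ℝ (p i) (p (σ i))) (segment ℝ (p j) (p (σ j)))) :
    ∀ i : Fin (2 * n), Odd (i.val + (σ i).val) :=
  circle_noncrossing_matching_opposite_parity_general n θ hθmono hθrange p hp σ hinv hfpf hnc
end
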